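/- (Two-field noncommutative Gauss laws from the Bianchi identity.) Let B be a unital associative ℂ-algebra with four pairwise commuting ℂ-linear derivations ∂₀,…,∂₃, and let (φ^e, A^e) and (φ^m, A^m) be arbitrary pairs of a scalar and a triple of elements of B. With the fields defined below, ∇·H^e = ρ and ∇·D^m = ρ, where ρ := i[B^e,A^m] + i[E^m,A^e] and [X,Y] := Σ_k (X_kY_k − Y_kX_k). In particular both equations hold for every pair of gauge potentials. -/

import Mathlib

noncomputable section

namespace NC

variable {B : Type*} [Ring B] [Algebra ℂ B]

/-- A ℂ-linear derivation of the (possibly noncommutative) ℂ-algebra `B`,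
given as a plain function together with its defining properties. -/
structure IsDer (δ : B → B) : Prop where
  map_add : ∀ a b : B, δ (a + b) = δ a + δ b
  map_smul : ∀ (c : ℂ) (a : B), δ (c • a) = c • δ a
  leibniz : ∀ a b : B, δ (a * b) = δ a * b + a * δ b

/-- divergence `∇·X` of a triple. -/
def divg (d1 d2 d3 : B → B) (X : B × B × B) : B := d1 X.1 + d2 X.2.1 + d3 X.2.2

/-- curl `∇×X` of a triple. -/
def curl (d1 d2 d3 : B → B) (X : B × B × B) : B × B × B :=
  (d2 X.2.2 - d3 X.2.1, d3 X.1 - d1 X.2.2, d1 X.2.1 - d2 X.1)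

/-- gradient `∇a`. -/
def grad (d1 d2 d3 : B → B) (a : B) : B × B × B := (d1 a, d2 a, d3 a)

/-- apply a derivation componentwise to a triple, e.g. `∂₀X`. -/
def dmap (d0 : B → B) (X : B × B × B) : B × B × B := (d0 X.1, d0 X.2.1, d0 X.2.2)

/-- ordered cross product `X×Y` (multiplication from top to bottom). -/
def cross (X Y : B × B × B) : B × B × B :=
  (X.2.1 * Y.2.2 - X.2.2 * Y.2.1, X.2.2 * Y.1 - X.1 * Y.2.2, X.1 * Y.2.1 - X.2.1 * Y.1)

/-- componentwise commutator `[a,X] = (aX_k - X_k a)_k`. -/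
def commS (a : B) (X : B × B × B) : B × B × B :=
  (a * X.1 - X.1 * a, a * X.2.1 - X.2.1 * a, a * X.2.2 - X.2.2 * a)

/-- componentwise commutator `[X,a] = (X_k a - a X_k)_k`. -/
def commR (X : B × B × B) (a : B) : B × B × B :=
  (X.1 * a - a * X.1, X.2.1 * a - a * X.2.1, X.2.2 * a - a * X.2.2)

/-- scalar commutator `[X,Y] = Σ_k (X_k Y_k - Y_k X_k)`. -/
def commV (X Y : B × B × B) : B :=
  (X.1 * Y.1 - Y.1 * X.1) + (X.2.1 * Y.2.1 - Y.2.1 * X.2.1) +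
    (X.2.2 * Y.2.2 - Y.2.2 * X.2.2)

/-- classical part of the electric field: `E = -∂₀A - ∇φ`. -/
def Efield (d0 d1 d2 d3 : B → B) (φ : B) (A : B × B × B) : B × B × B :=
  -dmap d0 A - grad d1 d2 d3 φ

/-- classical part of the magnetic field: `Bf = ∇×A`. -/
def Bfield (d1 d2 d3 : B → B) (A : B × B × B) : B × B × B := curl d1 d2 d3 A

/-- the noncommutative electric field `D = E + i[φ,A]`. -/
def Dfield (d0 d1 d2 d3 : B → B) (φ : B) (A : B × B × B) : B × B × B :=
  Efield d0 d1 d2 d3 φ A + Complex.I • commS φ A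

/-- the noncommutative magnetic field `H = Bf + i(A×A)`. -/
def Hfield (d1 d2 d3 : B → B) (A : B × B × B) : B × B × B :=
  Bfield d1 d2 d3 A + Complex.I • cross A A

end NC


namespace NC

namespace TwoPhoton

variable {B : Type*} [Ring B] [Algebra ℂ B]

/-- `K := [φ^m,A^e] + [φ^e,A^m]` (componentwise commutators). -/
def Kv (φe φm : B) (Ae Am : B × B × B) : B × B × B := commS φm Ae + commS φe Am

/-- `C := A^e×A^m + A^m×A^e`. -/
def Cv (Ae Am : B × B × B) : B × B × B := cross Ae Am + cross Am Ae

/-- `E^e := -∂₀A^e - ∇φ^e`. -/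
def Ee (d0 d1 d2 d3 : B → B) (φe : B) (Ae : B × B × B) : B × B × B :=
  -dmap d0 Ae - grad d1 d2 d3 φe

/-- `B^e := ∇×A^e`. -/
def Be (d1 d2 d3 : B → B) (Ae : B × B × B) : B × B × B := curl d1 d2 d3 Ae

/-- `B^m := -∂₀A^m - ∇φ^m`. -/
def Bm (d0 d1 d2 d3 : B → B) (φm : B) (Am : B × B × B) : B × B × B :=
  -dmap d0 Am - grad d1 d2 d3 φm

/-- `E^m := ∇×A^m`. -/
def Em (d1 d2 d3 : B → B) (Am : B × B × B) : B × B × B := curl d1 d2 d3 Am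

/-- `D^e := E^e + iK`. -/
def De (d0 d1 d2 d3 : B → B) (φe : B) (Ae : B × B × B) (φm : B) (Am : B × B × B) :
    B × B × B :=
  Ee d0 d1 d2 d3 φe Ae + Complex.I • Kv φe φm Ae Am

/-- `H^e := B^e + iC`. -/
def He (d1 d2 d3 : B → B) (Ae Am : B × B × B) : B × B × B :=
  Be d1 d2 d3 Ae + Complex.I • Cv Ae Am

/-- `H^m := B^m + iK`. -/
def Hm (d0 d1 d2 d3 : B → B) (φe : B) (Ae : B × B × B) (φm : B) (Am : B × B × B) :
    B × B × B :=
  Bm d0 d1 d2 d3 φm Am + Complex.I • Kv φe φm Ae Am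

/-- `D^m := E^m + iC`. -/
def Dm (d1 d2 d3 : B → B) (Ae Am : B × B × B) : B × B × B :=
  Em d1 d2 d3 Am + Complex.I • Cv Ae Am

end TwoPhoton

/-! The Bianchi identity `∇·(∇×A) = 0` kills the classical parts of `H^e` and `D^m`, so both
divergences reduce to `i ∇·C`. By the noncommutative product rule
`∇·(X×Y) = (∇×X)·Y - X·(∇×Y)` for ordered dot products, the symmetrised cross product
`C = A^e×A^m + A^m×A^e` has divergence `[∇×A^e, A^m] + [∇×A^m, A^e]`. -/

section VectorCalculus

variable {B : Type*} [Ring B]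

def dot (X Y : B × B × B) : B := X.1 * Y.1 + X.2.1 * Y.2.1 + X.2.2 * Y.2.2

theorem commV_eq_dot_sub_dot (X Y : B × B × B) : commV X Y = dot X Y - dot Y X := by
  simp only [commV, dot]
  abel

variable [Algebra ℂ B] {d1 d2 d3 : B → B}

theorem IsDer.map_sub {δ : B → B} (h : IsDer δ) (a b : B) : δ (a - b) = δ a - δ b :=
  (AddMonoidHom.mk' δ h.map_add).map_sub a b

theorem divg_add (h1 : IsDer d1) (h2 : IsDer d2) (h3 : IsDer d3) (X Y : B × B × B) :
    divg d1 d2 d3 (X + Y) = divg d1 d2 d3 X + divg d1 d2 d3 Y := by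
  simp only [divg, Prod.fst_add, Prod.snd_add, h1.map_add, h2.map_add, h3.map_add]
  abel

theorem divg_smul (h1 : IsDer d1) (h2 : IsDer d2) (h3 : IsDer d3) (c : ℂ) (X : B × B × B) :
    divg d1 d2 d3 (c • X) = c • divg d1 d2 d3 X := by
  simp only [divg, Prod.smul_fst, Prod.smul_snd, h1.map_smul, h2.map_smul, h3.map_smul,
    smul_add]

theorem divg_curl (h1 : IsDer d1) (h2 : IsDer d2) (h3 : IsDer d3)
    (c12 : ∀ x, d1 (d2 x) = d2 (d1 x)) (c13 : ∀ x, d1 (d3 x) = d3 (d1 x))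
    (c23 : ∀ x, d2 (d3 x) = d3 (d2 x)) (X : B × B × B) :
    divg d1 d2 d3 (curl d1 d2 d3 X) = 0 := by
  simp only [divg, curl, h1.map_sub, h2.map_sub, h3.map_sub, c12, c13, c23]
  abel

theorem divg_cross (h1 : IsDer d1) (h2 : IsDer d2) (h3 : IsDer d3) (X Y : B × B × B) :
    divg d1 d2 d3 (cross X Y) = dot (curl d1 d2 d3 X) Y - dot X (curl d1 d2 d3 Y) := by
  simp only [divg, cross, dot, curl, h1.map_sub, h2.map_sub, h3.map_sub,
    h1.leibniz, h2.leibniz, h3.leibniz]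
  noncomm_ring

theorem divg_curl_add_smul (h1 : IsDer d1) (h2 : IsDer d2) (h3 : IsDer d3)
    (c12 : ∀ x, d1 (d2 x) = d2 (d1 x)) (c13 : ∀ x, d1 (d3 x) = d3 (d1 x))
    (c23 : ∀ x, d2 (d3 x) = d3 (d2 x)) (c : ℂ) (X Y : B × B × B) :
    divg d1 d2 d3 (curl d1 d2 d3 X + c • Y) = c • divg d1 d2 d3 Y := by
  rw [divg_add h1 h2 h3, divg_smul h1 h2 h3, divg_curl h1 h2 h3 c12 c13 c23, zero_add]

end VectorCalculus

namespace TwoPhoton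

theorem divg_Cv {B : Type*} [Ring B] [Algebra ℂ B] {d1 d2 d3 : B → B}
    (h1 : IsDer d1) (h2 : IsDer d2) (h3 : IsDer d3) (Ae Am : B × B × B) :
    divg d1 d2 d3 (Cv Ae Am) =
      commV (curl d1 d2 d3 Ae) Am + commV (curl d1 d2 d3 Am) Ae := by
  rw [Cv, divg_add h1 h2 h3, divg_cross h1 h2 h3, divg_cross h1 h2 h3,
    commV_eq_dot_sub_dot, commV_eq_dot_sub_dot]
  abel

theorem nc_two_field_gauss_laws_general {B : Type*} [Ring B] [Algebra ℂ B]
    (d0 d1 d2 d3 : B → B)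
    (h1 : IsDer d1) (h2 : IsDer d2) (h3 : IsDer d3)
    (hcomm : ∀ δ ∈ [d0, d1, d2, d3], ∀ δ' ∈ [d0, d1, d2, d3], ∀ x : B,
      δ (δ' x) = δ' (δ x))
    (Ae Am : B × B × B) :
    divg d1 d2 d3 (He d1 d2 d3 Ae Am) =
      Complex.I • commV (Be d1 d2 d3 Ae) Am +
        Complex.I • commV (Em d1 d2 d3 Am) Ae ∧
    divg d1 d2 d3 (Dm d1 d2 d3 Ae Am) =
      Complex.I • commV (Be d1 d2 d3 Ae) Am +
        Complex.I • commV (Em d1 d2 d3 Am) Ae := by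
  have bianchi := divg_curl_add_smul h1 h2 h3 (hcomm d1 (by simp) d2 (by simp))
    (hcomm d1 (by simp) d3 (by simp)) (hcomm d2 (by simp) d3 (by simp)) Complex.I
  have hρ : Complex.I • divg d1 d2 d3 (Cv Ae Am) =
      Complex.I • commV (Be d1 d2 d3 Ae) Am + Complex.I • commV (Em d1 d2 d3 Am) Ae := by
    rw [divg_Cv h1 h2 h3, smul_add, Be, Em]
  exact ⟨(bianchi Ae _).trans hρ, (bianchi Am _).trans hρ⟩

/-- **Two-field noncommutative Gauss laws** from the Bianchi identity of the
two-photon model: for every pair of gauge potentials `(φ^e,A^e)`, `(φ^m,A^m)`,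
`∇·H^e = ρ` and `∇·D^m = ρ`, where `ρ := i[B^e,A^m] + i[E^m,A^e]`. -/
theorem nc_two_field_gauss_laws {B : Type*} [Ring B] [Algebra ℂ B]
    (d0 d1 d2 d3 : B → B)
    (h0 : IsDer d0) (h1 : IsDer d1) (h2 : IsDer d2) (h3 : IsDer d3)
    (hcomm : ∀ δ ∈ [d0, d1, d2, d3], ∀ δ' ∈ [d0, d1, d2, d3], ∀ x : B,
      δ (δ' x) = δ' (δ x))
    (φe φm : B) (Ae Am : B × B × B) :
    divg d1 d2 d3 (He d1 d2 d3 Ae Am) =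
      Complex.I • commV (Be d1 d2 d3 Ae) Am +
        Complex.I • commV (Em d1 d2 d3 Am) Ae ∧
    divg d1 d2 d3 (Dm d1 d2 d3 Ae Am) =
      Complex.I • commV (Be d1 d2 d3 Ae) Am +
        Complex.I • commV (Em d1 d2 d3 Am) Ae :=
  nc_two_field_gauss_laws_general d0 d1 d2 d3 h1 h2 h3 hcomm Ae Am

end TwoPhoton

end NC
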